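/- arXiv:2008.05066 — 5 statements merged into one kernel-verified Lean document; each statement's English description precedes it below -/
import Mathlib

section
/- For any positive integers $j_1,\dots,j_n \geq 0$ summing to $r$, the multinomial coefficient $\binom{2r}{2j_1,\dots,2j_n}$ is at most $(2r)^r \binom{r}{j_1,\dots,j_n}$. -/
/-- For nonnegative integers `j₁, …, jₙ` summing to `r`, the multinomial coefficient
`(2r)! / ((2j₁)! ⋯ (2jₙ)!)` is at most `(2r)^r` times `r! / (j₁! ⋯ jₙ!)`. -/
theorem multinomial_double_le {n r : ℕ} (j : Fin n → ℕ)
    (hsum : ∑ i, j i = r) :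
    Nat.multinomial Finset.univ (fun i => 2 * j i) ≤
      (2 * r) ^ r * Nat.multinomial Finset.univ j := by
  set A := Nat.multinomial Finset.univ (fun i => 2 * j i) with hA
  set B := Nat.multinomial Finset.univ j with hB
  have hP1pos : 0 < ∏ i, Nat.factorial (j i) := Finset.prod_pos fun i _ => Nat.factorial_pos _
  refine Nat.le_of_mul_le_mul_right ?_ hP1pos
  have h1 : (∏ i, Nat.factorial (j i)) * A ≤ (∏ i, Nat.factorial (2 * j i)) * A :=
    Nat.mul_le_mul_right _ <| Finset.prod_le_prod (fun _ _ => Nat.zero_le _)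
      (fun i _ => Nat.factorial_le (by omega))
  have h2 : (∏ i, Nat.factorial (2 * j i)) * A = Nat.factorial (2 * r) := by
    rw [hA, Nat.multinomial_spec]
    congr 1
    rw [← Finset.mul_sum, hsum]
  have h3 : Nat.factorial (2 * r) ≤ (2 * r) ^ r * Nat.factorial r := by
    have := Nat.factorial_mul_descFactorial (show r ≤ 2 * r by omega)
    have h4 : (2 * r - r) = r := by omega
    rw [h4] at this
    calc Nat.factorial (2 * r) = Nat.factorial r * (2 * r).descFactorial r := this.symm
      _ ≤ Nat.factorial r * (2 * r) ^ r := Nat.mul_le_mul_left _ (Nat.descFactorial_le_pow _ _)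
      _ = (2 * r) ^ r * Nat.factorial r := Nat.mul_comm _ _
  have h5 : (∏ i, Nat.factorial (j i)) * B = Nat.factorial r := by rw [hB, Nat.multinomial_spec, hsum]
  calc A * ∏ i, Nat.factorial (j i) = (∏ i, Nat.factorial (j i)) * A := Nat.mul_comm _ _
    _ ≤ (2 * r) ^ r * Nat.factorial r := by omega
    _ = (2 * r) ^ r * ((∏ i, Nat.factorial (j i)) * B) := by rw [h5]
    _ = (2 * r) ^ r * B * ∏ i, Nat.factorial (j i) := by ring
end

section
/- (Khintchine inequality for Type II superorthogonal systems) Let $r \geq 1$ be an integer, $X$ a measure space, $H$ a finite-dimensional complex Hilbert space, and $S$ a finite set. Suppose $(f_s)_{s \in S}$ with $f_s \in L^{2r}(X;H)$ satisfies: $\int_X \prod_{j=1}^r \langle f_{s_j}, f_{s_{r+j}}\rangle_H \, d\mu = 0$ whenever one of $s_1, \dots, s_{2r} \in S$ appears exactly once in the tuple. Then $\|\sum_{s \in S} f_s\|_{L^{2r}(X;H)} \leq (Cr)^{1/2} \| (\sum_{s \in S} \|f_s\|_H^2)^{1/2} \|_{L^{2r}(X)}$ for some absolute constant $C$. -/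
/-!
Expanding `‖∑ f_s‖^{2r} = ⟪∑ f_s, ∑ f_s⟫^r` writes the integrand as a sum, over pairs of
`r`-tuples `(s, t)`, of `∏_j ⟪f_{s_j}, f_{t_j}⟫`. Superorthogonality kills the integrals of the
terms with a nonce, and the other terms are bounded pointwise by `∏_j a_{s_j} a_{t_j}`, where
`a_s = ‖f_s(x)‖`.

The nonce-free sum of these products is compared with the moment `E Y^{2r}` of the random sum
`Y = ∑ a_s ξ_s`, the `ξ_s` being independent, equal to `4` with probability `1/5` and to `-1`
otherwise. As `E ξ = 0` while `E ξ^m ≥ 1` for every other `m`, expanding `E Y^{2r}` produces the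
nonce-free sum plus nonnegative terms. On the other hand, by Hoeffding's lemma `Y` is sub-Gaussian
with variance proxy `(25/4) ∑ a_s²`, whence `E Y^{2r} ≤ (75 r ∑ a_s²)^r`.
-/

open MeasureTheory ProbabilityTheory Finset Real
open scoped NNReal Nat

lemma pow_two_mul_le_factorial_mul_exp_add_exp (n : ℕ) (y : ℝ) :
    y ^ (2 * n) ≤ (2 * n)! * (exp y + exp (-y)) := by
  have h := pow_div_factorial_le_exp |y| (abs_nonneg y) (2 * n)
  rw [div_le_iff₀ (by positivity), (even_two_mul n).pow_abs] at h
  have h_abs : exp |y| ≤ exp y + exp (-y) := by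
    rcases abs_choice y with hy | hy <;> rw [hy] <;> linarith [exp_pos y, exp_pos (-y)]
  nlinarith [(Nat.cast_pos (α := ℝ)).2 (2 * n).factorial_pos]

lemma two_mul_factorial_mul_exp_le {r : ℕ} (hr : 1 ≤ r) :
    2 * (2 * r)! * exp r ≤ (24 * r ^ 2 : ℝ) ^ r := by
  have h_fact : ((2 * r)! : ℝ) ≤ (4 * r ^ 2 : ℝ) ^ r := by
    calc ((2 * r)! : ℝ) ≤ ((2 * r : ℕ) : ℝ) ^ (2 * r) := by
          exact_mod_cast Nat.factorial_le_pow (2 * r)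
      _ = (4 * r ^ 2 : ℝ) ^ r := by rw [pow_mul]; push_cast; ring
  have h_exp : exp r ≤ (3 : ℝ) ^ r := by
    rw [← exp_one_pow]
    exact pow_le_pow_left₀ (exp_pos 1).le (by linarith [exp_one_lt_d9]) r
  have h_two : (2 : ℝ) ≤ 2 ^ r := by simpa using pow_le_pow_right₀ one_le_two hr
  calc 2 * (2 * r)! * exp r ≤ 2 ^ r * (4 * r ^ 2 : ℝ) ^ r * 3 ^ r := by gcongr
    _ = (24 * r ^ 2 : ℝ) ^ r := by rw [← mul_pow, ← mul_pow]; ring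

lemma rpow_inv_two_mul_le_sqrt_mul {A B K : ℝ} (hA : 0 ≤ A) (hB : 0 ≤ B) (hK : 0 ≤ K) {r : ℕ}
    (hr : r ≠ 0) (h : A ≤ K ^ r * B) :
    A ^ (1 / (2 * r : ℝ)) ≤ √K * B ^ (1 / (2 * r : ℝ)) := by
  have h_sqrt : (K ^ r) ^ (1 / (2 * r : ℝ)) = √K := by
    rw [← Real.rpow_natCast, ← Real.rpow_mul hK, Real.sqrt_eq_rpow]
    congr 1
    field_simp
  calc A ^ (1 / (2 * r : ℝ)) ≤ (K ^ r * B) ^ (1 / (2 * r : ℝ)) :=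
        Real.rpow_le_rpow hA h (by positivity)
    _ = √K * B ^ (1 / (2 * r : ℝ)) := by rw [Real.mul_rpow (by positivity) hB, h_sqrt]

lemma prod_mul_le_sum_pow {ι : Type*} [Fintype ι] {a : ι → ℝ} (ha : ∀ s, 0 ≤ a s) {r : ℕ}
    (s t : Fin r → ι) : ∏ j, a (s j) * a (t j) ≤ (∑ i, a i) ^ (2 * r) := by
  have h_le (i : ι) : a i ≤ ∑ i, a i := single_le_sum (fun i _ => ha i) (mem_univ i)
  calc ∏ j, a (s j) * a (t j) ≤ ∏ _j : Fin r, (∑ i, a i) * ∑ i, a i :=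
        prod_le_prod (fun j _ => mul_nonneg (ha _) (ha _))
          fun j _ => mul_le_mul (h_le _) (h_le _) (ha _) (sum_nonneg fun i _ => ha i)
    _ = (∑ i, a i) ^ (2 * r) := by rw [prod_const, card_univ, Fintype.card_fin, ← sq, pow_mul]

lemma sum_sq_pow_le_sum_pow {ι : Type*} [Fintype ι] {a : ι → ℝ} (ha : ∀ s, 0 ≤ a s) (r : ℕ) :
    (∑ i, a i ^ 2) ^ r ≤ (∑ i, a i) ^ (2 * r) := by
  rw [pow_mul]
  exact pow_le_pow_left₀ (sum_nonneg fun i _ => sq_nonneg _)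
    (sum_sq_le_sq_sum_of_nonneg fun i _ => ha i) r

lemma pow_sum_sum_eq_sum_prod {R ι : Type*} [CommSemiring R] [Fintype ι] (g : ι → ι → R)
    (r : ℕ) :
    (∑ p, ∑ q, g p q) ^ r = ∑ st : (Fin r → ι) × (Fin r → ι), ∏ j, g (st.1 j) (st.2 j) := by
  rw [← Fintype.sum_prod_type', Fintype.sum_pow]
  exact Fintype.sum_equiv (Equiv.arrowProdEquivProdArrow _ _ _) _ _ fun _ => rfl

lemma ofReal_norm_sum_pow_eq {𝕜 E ι : Type*} [RCLike 𝕜] [NormedAddCommGroup E]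
    [InnerProductSpace 𝕜 E] [Fintype ι] (v : ι → E) (r : ℕ) :
    ((‖∑ s, v s‖ ^ (2 * r) : ℝ) : 𝕜) =
      ∑ st : (Fin r → ι) × (Fin r → ι), ∏ j, inner 𝕜 (v (st.1 j)) (v (st.2 j)) := by
  rw [pow_mul, RCLike.ofReal_pow, RCLike.ofReal_pow, ← inner_self_eq_norm_sq_to_K, sum_inner]
  simp_rw [inner_sum]
  exact pow_sum_sum_eq_sum_prod _ r

lemma norm_prod_inner_le {𝕜 E κ : Type*} [RCLike 𝕜] [NormedAddCommGroup E]
    [InnerProductSpace 𝕜 E] [Fintype κ] (u v : κ → E) :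
    ‖∏ j, inner 𝕜 (u j) (v j)‖ ≤ ∏ j, ‖u j‖ * ‖v j‖ :=
  (Finset.norm_prod_le _ _).trans
    (prod_le_prod (fun _ _ => norm_nonneg _) fun _ _ => norm_inner_le_norm _ _)

namespace ProbabilityTheory.HasSubgaussianMGF

variable {Ω : Type*} {m : MeasurableSpace Ω} {μ : Measure Ω} {X : Ω → ℝ} {c : ℝ≥0}

lemma pow_mul_integral_pow_le (h : HasSubgaussianMGF X c μ) (n : ℕ) (t : ℝ) :
    t ^ (2 * n) * ∫ ω, X ω ^ (2 * n) ∂μ ≤ 2 * (2 * n)! * exp (c * t ^ 2 / 2) := by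
  calc t ^ (2 * n) * ∫ ω, X ω ^ (2 * n) ∂μ = ∫ ω, (t * X ω) ^ (2 * n) ∂μ := by
        rw [← integral_const_mul]; simp_rw [mul_pow]
    _ ≤ ∫ ω, (2 * n)! * (exp (t * X ω) + exp (-t * X ω)) ∂μ := by
        refine integral_mono_of_nonneg (ae_of_all _ fun ω => (even_two_mul n).pow_nonneg _)
          (((h.integrable_exp_mul t).add (h.integrable_exp_mul (-t))).const_mul _)
          (ae_of_all _ fun ω => ?_)
        simpa [neg_mul] using pow_two_mul_le_factorial_mul_exp_add_exp n (t * X ω)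
    _ = (2 * n)! * (mgf X μ t + mgf X μ (-t)) := by
        rw [integral_const_mul, integral_add (h.integrable_exp_mul t) (h.integrable_exp_mul (-t))]
        rfl
    _ ≤ (2 * n)! * (exp (c * t ^ 2 / 2) + exp (c * (-t) ^ 2 / 2)) := by
        gcongr
        exacts [h.mgf_le t, h.mgf_le (-t)]
    _ = 2 * (2 * n)! * exp (c * t ^ 2 / 2) := by rw [neg_sq]; ring

lemma integral_pow_two_mul_le (h : HasSubgaussianMGF X c μ) {r : ℕ} (hr : 1 ≤ r) :
    ∫ ω, X ω ^ (2 * r) ∂μ ≤ (12 * c * r : ℝ) ^ r := by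
  rcases eq_or_ne c 0 with rfl | hc
  · have h_zero : (fun ω => X ω ^ (2 * r)) =ᵐ[μ] 0 := by
      filter_upwards [h.ae_eq_zero_of_hasSubgaussianMGF_zero] with ω hω
      simp [hω, show 2 * r ≠ 0 by omega]
    simp [integral_congr_ae h_zero, show r ≠ 0 by omega]
  set t := √(2 * r / c)
  have ht : t ^ 2 = 2 * r / c := sq_sqrt (by positivity)
  have key := h.pow_mul_integral_pow_le r t
  rw [pow_mul, ht, show (c : ℝ) * (2 * r / c) / 2 = r by field_simp] at key
  rw [← le_div_iff₀' (by positivity)] at key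
  calc ∫ ω, X ω ^ (2 * r) ∂μ ≤ 2 * (2 * r)! * exp r / (2 * r / c) ^ r := key
    _ ≤ (24 * r ^ 2 : ℝ) ^ r / (2 * r / c) ^ r := by
        gcongr; exact two_mul_factorial_mul_exp_le hr
    _ = (12 * c * r : ℝ) ^ r := by rw [← div_pow]; congr 1; field_simp; ring

end ProbabilityTheory.HasSubgaussianMGF

namespace Khintchine

section Nonce

variable {ι : Type*} [DecidableEq ι] {r : ℕ}

/-- The paper's tuple `(s_1, …, s_{2r})` is encoded as the pair `(s, t)`, with
`s_{j+1} = s j` and `s_{r+j+1} = t j`. -/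
def occurrences (s t : Fin r → ι) (a : ι) : ℕ := #{j | s j = a} + #{j | t j = a}

def HasNonce (s t : Fin r → ι) : Prop := ∃ a, occurrences s t a = 1

instance [Fintype ι] (s t : Fin r → ι) : Decidable (HasNonce s t) := by
  unfold HasNonce; infer_instance

lemma prod_mul_prod_eq_prod_pow_occurrences [Fintype ι] {M : Type*} [CommMonoid M] (g : ι → M)
    (s t : Fin r → ι) : ∏ j, g (s j) * g (t j) = ∏ a, g a ^ occurrences s t a := by
  rw [prod_mul_distrib, ← prod_fiberwise' univ s g, ← prod_fiberwise' univ t g,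
    ← prod_mul_distrib]
  simp only [prod_const, occurrences, pow_add]

end Nonce

noncomputable def twoPointLaw : Measure Bool := Ber(true, false, ⟨1 / 5, by norm_num, by norm_num⟩)

def twoPointValue (b : Bool) : ℝ := if b then 4 else -1

instance : IsProbabilityMeasure twoPointLaw := by unfold twoPointLaw; infer_instance

lemma integral_twoPointLaw (g : Bool → ℝ) :
    ∫ b, g b ∂twoPointLaw = (g true + 4 * g false) / 5 := by
  rw [twoPointLaw, integral_bernoulliMeasure]
  simp only [smul_eq_mul]
  ring

lemma integral_twoPointValue_pow (n : ℕ) :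
    ∫ b, twoPointValue b ^ n ∂twoPointLaw = (4 ^ n + 4 * (-1) ^ n) / 5 := by
  simp [integral_twoPointLaw, twoPointValue]

lemma one_le_integral_twoPointValue_pow {n : ℕ} (hn : n ≠ 1) :
    1 ≤ ∫ b, twoPointValue b ^ n ∂twoPointLaw := by
  rw [integral_twoPointValue_pow]
  obtain _ | _ | n := n
  · norm_num
  · exact absurd rfl hn
  · have h16 : (4 : ℝ) ^ 2 ≤ 4 ^ (n + 2) := pow_le_pow_right₀ (by norm_num) (by omega)
    rcases neg_one_pow_eq_or ℝ (n + 2) with h | h <;> rw [h] <;> linarith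

lemma integral_twoPointValue_pow_nonneg (n : ℕ) :
    0 ≤ ∫ b, twoPointValue b ^ n ∂twoPointLaw := by
  rcases eq_or_ne n 1 with rfl | hn
  · norm_num [integral_twoPointLaw, twoPointValue]
  · exact zero_le_one.trans (one_le_integral_twoPointValue_pow hn)

lemma hasSubgaussianMGF_twoPointValue : HasSubgaussianMGF twoPointValue (25 / 4) twoPointLaw := by
  have h := hasSubgaussianMGF_of_mem_Icc_of_integral_eq_zero (X := twoPointValue)
    (μ := twoPointLaw) (a := -1) (b := 4) Measurable.of_discrete.aemeasurable
    (ae_of_all _ fun b => by cases b <;> norm_num [twoPointValue])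
    (by simp [integral_twoPointLaw, twoPointValue])
  convert h using 1
  ext
  norm_num

noncomputable abbrev productLaw (ι : Type*) [Fintype ι] : Measure (ι → Bool) :=
  Measure.pi fun _ : ι => twoPointLaw

section RandomSum

variable {ι : Type*} [Fintype ι]

lemma hasSubgaussianMGF_sum (a : ι → ℝ) :
    HasSubgaussianMGF (fun ω => ∑ s, a s * twoPointValue (ω s))
      (∑ s, ‖a s‖₊ ^ 2 * (25 / 4)) (productLaw ι) := by
  refine HasSubgaussianMGF.sum_of_iIndepFun
    (iIndepFun_pi (X := fun s b => a s * twoPointValue b)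
      fun _ => Measurable.of_discrete.aemeasurable) fun s _ => ?_
  refine HasSubgaussianMGF.of_map (X := fun b => a s * twoPointValue b)
    (Y := fun ω : ι → Bool => ω s) (measurable_pi_apply s).aemeasurable ?_
  rw [(measurePreserving_eval (fun _ : ι => twoPointLaw) s).map_eq]
  convert hasSubgaussianMGF_twoPointValue.const_mul (a s) using 2
  ext
  simp only [NNReal.coe_mul, NNReal.coe_pow, coe_nnnorm, Real.norm_eq_abs, sq_abs]
  rfl

lemma integral_sum_pow_le (a : ι → ℝ) {r : ℕ} (hr : 1 ≤ r) :
    ∫ ω, (∑ s, a s * twoPointValue (ω s)) ^ (2 * r) ∂productLaw ι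
      ≤ (75 * r : ℝ) ^ r * (∑ s, a s ^ 2) ^ r := by
  refine ((hasSubgaussianMGF_sum a).integral_pow_two_mul_le hr).trans_eq ?_
  rw [← mul_pow]
  push_cast
  simp only [Real.norm_eq_abs, sq_abs, ← sum_mul]
  ring

variable [DecidableEq ι]

lemma integral_sum_pow_eq (a : ι → ℝ) (r : ℕ) :
    ∫ ω, (∑ s, a s * twoPointValue (ω s)) ^ (2 * r) ∂productLaw ι =
      ∑ st : (Fin r → ι) × (Fin r → ι), (∏ j, a (st.1 j) * a (st.2 j)) *
        ∏ b, ∫ x, twoPointValue x ^ occurrences st.1 st.2 b ∂twoPointLaw := by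
  have h_expand (ω : ι → Bool) : (∑ s, a s * twoPointValue (ω s)) ^ (2 * r) =
      ∑ st : (Fin r → ι) × (Fin r → ι), (∏ j, a (st.1 j) * a (st.2 j)) *
        ∏ b, twoPointValue (ω b) ^ occurrences st.1 st.2 b := by
    rw [pow_mul, sq, sum_mul_sum, pow_sum_sum_eq_sum_prod]
    refine sum_congr rfl fun st _ => ?_
    rw [← prod_mul_prod_eq_prod_pow_occurrences (fun b => twoPointValue (ω b)),
      ← prod_mul_distrib]
    exact prod_congr rfl fun j _ => by ring
  simp_rw [h_expand]
  rw [integral_finsetSum _ fun _ _ => Integrable.of_finite]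
  refine sum_congr rfl fun st _ => ?_
  rw [integral_const_mul]
  exact congrArg _
    (integral_fintype_prod_eq_prod fun b x => twoPointValue x ^ occurrences st.1 st.2 b)

lemma sum_not_hasNonce_le_integral {a : ι → ℝ} (ha : ∀ s, 0 ≤ a s) (r : ℕ) :
    ∑ st : (Fin r → ι) × (Fin r → ι) with ¬HasNonce st.1 st.2, ∏ j, a (st.1 j) * a (st.2 j) ≤
      ∫ ω, (∑ s, a s * twoPointValue (ω s)) ^ (2 * r) ∂productLaw ι := by
  have h_prod_nonneg (st : (Fin r → ι) × (Fin r → ι)) : 0 ≤ ∏ j, a (st.1 j) * a (st.2 j) :=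
    prod_nonneg fun j _ => mul_nonneg (ha _) (ha _)
  rw [integral_sum_pow_eq]
  calc _ ≤ ∑ st : (Fin r → ι) × (Fin r → ι) with ¬HasNonce st.1 st.2,
        (∏ j, a (st.1 j) * a (st.2 j)) *
          ∏ b, ∫ x, twoPointValue x ^ occurrences st.1 st.2 b ∂twoPointLaw := by
        refine sum_le_sum fun st hst => le_mul_of_one_le_right (h_prod_nonneg st) ?_
        refine one_le_prod fun b _ => one_le_integral_twoPointValue_pow fun h => ?_
        exact (mem_filter.1 hst).2 ⟨b, h⟩
    _ ≤ _ := sum_le_sum_of_subset_of_nonneg (filter_subset _ _) fun st _ _ =>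
        mul_nonneg (h_prod_nonneg st)
          (prod_nonneg fun b _ => integral_twoPointValue_pow_nonneg _)

lemma sum_not_hasNonce_le {a : ι → ℝ} (ha : ∀ s, 0 ≤ a s) {r : ℕ} (hr : 1 ≤ r) :
    ∑ st : (Fin r → ι) × (Fin r → ι) with ¬HasNonce st.1 st.2, ∏ j, a (st.1 j) * a (st.2 j) ≤
      (75 * r : ℝ) ^ r * (∑ s, a s ^ 2) ^ r :=
  (sum_not_hasNonce_le_integral ha r).trans (integral_sum_pow_le a hr)

end RandomSum

section Superorthogonal

variable {X H ι : Type*} [MeasurableSpace X] {μ : Measure X} [NormedAddCommGroup H] [Fintype ι]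
  {f : ι → X → H} {r : ℕ}

lemma integrable_of_norm_le_sum_norm_pow {F : Type*} [NormedAddCommGroup F]
    (hf : ∀ s, MemLp (f s) (2 * r) μ) (hr : r ≠ 0) {g : X → F} (hg : AEStronglyMeasurable g μ)
    (hle : ∀ x, ‖g x‖ ≤ (∑ s, ‖f s x‖) ^ (2 * r)) : Integrable g μ := by
  have h_sum : MemLp (fun x => ∑ s, ‖f s x‖) (2 * r : ℕ) μ := by
    push_cast
    exact memLp_finsetSum univ fun s _ => (hf s).norm
  refine (h_sum.integrable_norm_pow (by omega)).mono' hg (ae_of_all _ fun x => ?_)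
  rw [Real.norm_of_nonneg (sum_nonneg fun s _ => norm_nonneg _)]
  exact hle x

lemma integrable_sum_sq_norm_pow (hf : ∀ s, MemLp (f s) (2 * r) μ) (hr : r ≠ 0) :
    Integrable (fun x => (∑ s, ‖f s x‖ ^ 2) ^ r) μ :=
  integrable_of_norm_le_sum_norm_pow hf hr
    ((Finset.aestronglyMeasurable_fun_sum _ fun s _ => (hf s).1.norm.pow 2).pow r) fun x => by
      rw [Real.norm_of_nonneg (by positivity)]
      exact sum_sq_pow_le_sum_pow (a := fun i => ‖f i x‖) (fun _ => norm_nonneg _) r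

lemma integrable_prod_norm_mul_norm (hf : ∀ s, MemLp (f s) (2 * r) μ) (hr : r ≠ 0)
    (s t : Fin r → ι) : Integrable (fun x => ∏ j, ‖f (s j) x‖ * ‖f (t j) x‖) μ :=
  integrable_of_norm_le_sum_norm_pow hf hr
    (Finset.aestronglyMeasurable_fun_prod _ fun _ _ => (hf _).1.norm.mul (hf _).1.norm) fun x => by
      rw [Real.norm_of_nonneg (prod_nonneg fun _ _ => by positivity)]
      exact prod_mul_le_sum_pow (a := fun i => ‖f i x‖) (fun _ => norm_nonneg _) s t

variable [InnerProductSpace ℂ H]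

lemma integrable_prod_inner (hf : ∀ s, MemLp (f s) (2 * r) μ) (hr : r ≠ 0) (s t : Fin r → ι) :
    Integrable (fun x => ∏ j, inner ℂ (f (s j) x) (f (t j) x)) μ :=
  integrable_of_norm_le_sum_norm_pow hf hr
    (Finset.aestronglyMeasurable_fun_prod _ fun _ _ => (hf _).1.inner (hf _).1) fun x =>
      (norm_prod_inner_le (fun j => f (s j) x) (fun j => f (t j) x)).trans
        (prod_mul_le_sum_pow (a := fun i => ‖f i x‖) (fun _ => norm_nonneg _) s t)

variable [DecidableEq ι]

lemma ofReal_integral_norm_sum_pow_eq (hf : ∀ s, MemLp (f s) (2 * r) μ) (hr : r ≠ 0)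
    (h_orth : ∀ s t : Fin r → ι, HasNonce s t →
      ∫ x, ∏ j, inner ℂ (f (s j) x) (f (t j) x) ∂μ = 0) :
    ((∫ x, ‖∑ s, f s x‖ ^ (2 * r) ∂μ : ℝ) : ℂ) =
      ∑ st : (Fin r → ι) × (Fin r → ι) with ¬HasNonce st.1 st.2,
        ∫ x, ∏ j, inner ℂ (f (st.1 j) x) (f (st.2 j) x) ∂μ := by
  rw [← integral_complex_ofReal]
  refine (integral_congr_ae (ae_of_all _ fun x => ofReal_norm_sum_pow_eq (f · x) r)).trans ?_
  rw [integral_finsetSum _ fun st _ => integrable_prod_inner hf hr st.1 st.2,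
    ← sum_filter_add_sum_filter_not univ fun st => HasNonce st.1 st.2,
    sum_eq_zero fun st hst => h_orth st.1 st.2 (mem_filter.1 hst).2, zero_add]

lemma integral_norm_sum_pow_le (hf : ∀ s, MemLp (f s) (2 * r) μ) (hr : 1 ≤ r)
    (h_orth : ∀ s t : Fin r → ι, HasNonce s t →
      ∫ x, ∏ j, inner ℂ (f (s j) x) (f (t j) x) ∂μ = 0) :
    ∫ x, ‖∑ s, f s x‖ ^ (2 * r) ∂μ ≤ (75 * r : ℝ) ^ r * ∫ x, (∑ s, ‖f s x‖ ^ 2) ^ r ∂μ := by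
  have hr₀ : r ≠ 0 := by omega
  rw [← Complex.ofReal_re (∫ x, ‖∑ s, f s x‖ ^ (2 * r) ∂μ),
    ofReal_integral_norm_sum_pow_eq hf hr₀ h_orth, ← integral_const_mul]
  refine (Complex.re_le_norm _).trans <| (norm_sum_le _ _).trans ?_
  calc ∑ st : (Fin r → ι) × (Fin r → ι) with ¬HasNonce st.1 st.2,
        ‖∫ x, ∏ j, inner ℂ (f (st.1 j) x) (f (st.2 j) x) ∂μ‖
      ≤ ∑ st : (Fin r → ι) × (Fin r → ι) with ¬HasNonce st.1 st.2,
          ∫ x, ∏ j, ‖f (st.1 j) x‖ * ‖f (st.2 j) x‖ ∂μ :=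
        sum_le_sum fun st _ => (norm_integral_le_integral_norm _).trans <|
          integral_mono (integrable_prod_inner hf hr₀ st.1 st.2).norm
            (integrable_prod_norm_mul_norm hf hr₀ st.1 st.2) fun x => norm_prod_inner_le _ _
    _ = ∫ x, ∑ st : (Fin r → ι) × (Fin r → ι) with ¬HasNonce st.1 st.2,
          ∏ j, ‖f (st.1 j) x‖ * ‖f (st.2 j) x‖ ∂μ :=
        (integral_finsetSum _ fun st _ => integrable_prod_norm_mul_norm hf hr₀ st.1 st.2).symm
    _ ≤ ∫ x, (75 * r : ℝ) ^ r * (∑ s, ‖f s x‖ ^ 2) ^ r ∂μ :=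
        integral_mono
          (integrable_finsetSum _ fun st _ => integrable_prod_norm_mul_norm hf hr₀ st.1 st.2)
          ((integrable_sum_sq_norm_pow hf hr₀).const_mul _)
          fun x => sum_not_hasNonce_le (fun s => norm_nonneg (f s x)) hr

end Superorthogonal

end Khintchine

open Khintchine in
/-- Khintchine inequality for Type II superorthogonal systems: there is an absolute
constant `C` such that for every `r ≥ 1`, measure space `X`, finite-dimensional complex
Hilbert space `H` and finite family `(f_s)` in `L^{2r}(X;H)` satisfying the Type II
`2r`-superorthogonality condition, one has
`‖∑_s f_s‖_{L^{2r}} ≤ (Cr)^{1/2} ‖(∑_s ‖f_s‖²)^{1/2}‖_{L^{2r}}`. -/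
theorem khintchine_superorthogonal :
    ∃ C : ℝ, 0 < C ∧
    ∀ (r : ℕ), 1 ≤ r →
    ∀ (X : Type) (_ : MeasurableSpace X) (μ : Measure X)
      (H : Type) (_ : NormedAddCommGroup H) (_ : @InnerProductSpace ℂ H _ _)
      (_ : FiniteDimensional ℂ H)
      (ι : Type) (_ : Fintype ι) (_ : DecidableEq ι)
      (f : ι → X → H),
      (∀ s, MemLp (f s) (2 * r) μ) →
      (∀ s t : Fin r → ι,
        (∃ a : ι, (Finset.univ.filter fun j => s j = a).card
            + (Finset.univ.filter fun j => t j = a).card = 1) →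
        ∫ x, ∏ j, (inner ℂ (f (s j) x) (f (t j) x) : ℂ) ∂μ = 0) →
      (∫ x, ‖∑ s, f s x‖ ^ (2 * r) ∂μ) ^ (1 / (2 * r : ℝ)) ≤
        Real.sqrt (C * r) *
          (∫ x, (∑ s, ‖f s x‖ ^ 2) ^ r ∂μ) ^ (1 / (2 * r : ℝ)) := by
  refine ⟨75, by norm_num, fun r hr X _ μ H _ _ _ ι _ _ f hf h_orth => ?_⟩
  exact rpow_inv_two_mul_le_sqrt_mul (integral_nonneg fun _ => by positivity)
    (integral_nonneg fun _ => by positivity) (by positivity) (by omega)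
    (integral_norm_sum_pow_le hf hr h_orth)
end

section
/- (Probabilistic Erdős–Rado theorem) Let $k, r \geq 1$ be integers and let $\mathrm{Sun}(k,r)$ be the smallest natural number such that any $\mathrm{Sun}(k,r)$ distinct sets of cardinality at most $k$ contain $r$ distinct sets forming a sunflower. Let $S$ be a finite set and let $\mathbf{A}$ be a random subset of $S$ of cardinality exactly $k$ (with arbitrary distribution). If $\mathbf{A}_1, \dots, \mathbf{A}_r$ are independent copies of $\mathbf{A}$, then with probability at least $(4\,\mathrm{Sun}(k,r))^{-r}$, the sets $\mathbf{A}_1, \dots, \mathbf{A}_r$ form a sunflower. -/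
/-!
Put `N = Sun k r`, which is finite by the Erdős–Rado sunflower lemma, and draw `N * r`
independent copies of `𝐀`. Some `r` of them always form a sunflower: either `N` of the copies are
distinct, and `r` of those form a sunflower, or fewer than `N` values occur among `N * r` copies,
and one of them occurs `r` times. Every `r`-subset of the copies is distributed like
`(𝐀₁, …, 𝐀ᵣ)`, so the union bound gives `1 ≤ C(N r, r) ℙ(sunflower)`, and
`C(N r, r) ≤ (N r)ʳ / r! ≤ (e N)ʳ`.
-/

open MeasureTheory ProbabilityTheory ENNReal

/-- A finite family of finite sets is a sunflower: there is a core contained in all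
members such that the petals are pairwise disjoint. -/
def IsSunflower {α : Type*} [DecidableEq α] (F : Finset (Finset α)) : Prop :=
  ∃ core : Finset α, (∀ A ∈ F, core ⊆ A) ∧
    ∀ A ∈ F, ∀ B ∈ F, A ≠ B → Disjoint (A \ core) (B \ core)

/-- A tuple of finite sets (possibly with repetitions) forms a sunflower. -/
def IsSunflowerTuple {α : Type*} [DecidableEq α] {r : ℕ} (A : Fin r → Finset α) : Prop :=
  ∃ core : Finset α, (∀ i, core ⊆ A i) ∧
    ∀ i j, A i ≠ A j → Disjoint (A i \ core) (A j \ core)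

/-- `Sun k r`: the least `N` such that any `N` distinct sets of cardinality at most `k`
contain `r` distinct sets forming a sunflower. -/
noncomputable def Sun (k r : ℕ) : ℕ :=
  sInf {N | ∀ F : Finset (Finset ℕ), F.card = N → (∀ A ∈ F, A.card ≤ k) →
    ∃ F' ⊆ F, F'.card = r ∧ IsSunflower F'}

instance : MeasurableSpace (Finset ℕ) := ⊤

open Finset

section Sunflower

variable {α : Type*} [DecidableEq α]

lemma IsSunflower.of_pairwiseDisjoint {F : Finset (Finset α)}
    (hF : (F : Set (Finset α)).PairwiseDisjoint id) : IsSunflower F :=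
  ⟨∅, fun _ _ => empty_subset _, fun A hA B hB hAB => by
    rw [sdiff_empty, sdiff_empty]
    exact hF hA hB hAB⟩

lemma IsSunflower.image_insert {F : Finset (Finset α)} (hF : IsSunflower F) {y : α}
    (hy : ∀ A ∈ F, y ∉ A) : IsSunflower (F.image (insert y)) := by
  obtain ⟨core, hcore, hdisj⟩ := hF
  have hpetal : ∀ A ∈ F, insert y A \ insert y core = A \ core := fun A hA => by
    rw [insert_sdiff_insert, sdiff_insert_of_notMem (hy A hA)]
  refine ⟨insert y core, ?_, ?_⟩
  · simp only [forall_mem_image]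
    exact fun A hA => insert_subset_insert y (hcore A hA)
  · simp only [forall_mem_image]
    intro A hA B hB hAB
    rw [hpetal A hA, hpetal B hB]
    exact hdisj A hA B hB (ne_of_apply_ne _ hAB)

lemma IsSunflower.isSunflowerTuple {F : Finset (Finset α)} (hF : IsSunflower F) {r : ℕ}
    {y : Fin r → Finset α} (hy : ∀ i, y i ∈ F) : IsSunflowerTuple y :=
  let ⟨core, hcore, hdisj⟩ := hF
  ⟨core, fun i => hcore _ (hy i), fun i j => hdisj _ (hy i) _ (hy j)⟩

lemma exists_isSunflower_of_subset_image_erase {G F : Finset (Finset α)} {y : α}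
    (hy : ∀ A ∈ G, y ∈ A) (hFG : F ⊆ G.image (·.erase y)) (hF : IsSunflower F) :
    ∃ F' ⊆ G, F'.card = F.card ∧ IsSunflower F' := by
  have hyF : ∀ B ∈ F, y ∉ B := fun B hB => by
    obtain ⟨A, -, rfl⟩ := mem_image.1 (hFG hB)
    exact notMem_erase y A
  refine ⟨F.image (insert y), ?_, card_image_of_injOn ?_, hF.image_insert hyF⟩
  · simp only [subset_iff, forall_mem_image]
    intro B hB
    obtain ⟨A, hA, rfl⟩ := mem_image.1 (hFG hB)
    rwa [insert_erase (hy A hA)]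
  · intro B hB C hC hBC
    rw [← erase_insert (hyF B hB), ← erase_insert (hyF C hC)]
    exact congrArg (·.erase y) hBC

/-- A maximal pairwise disjoint subfamily either has `r` members or its union meets
every member of `F`. -/
lemma exists_pairwiseDisjoint_or_exists_inter_nonempty (F : Finset (Finset α)) (r s : ℕ)
    (hs : ∀ A ∈ F, A.card ≤ s) (hF : ∅ ∉ F) :
    (∃ D ⊆ F, D.card = r ∧ (D : Set (Finset α)).PairwiseDisjoint id) ∨
      ∃ Y : Finset α, Y.card ≤ (r - 1) * s ∧ ∀ A ∈ F, (A ∩ Y).Nonempty := by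
  classical
  obtain ⟨D, hD, hDmax⟩ := exists_max_image
    (F.powerset.filter fun D : Finset (Finset α) => (D : Set (Finset α)).PairwiseDisjoint id) card
    ⟨∅, by simp⟩
  obtain ⟨hDF, hDdisj⟩ := mem_filter.1 hD
  rw [mem_powerset] at hDF
  by_cases hr : r ≤ D.card
  · obtain ⟨D', hD'D, hD'r⟩ := exists_subset_card_eq hr
    exact .inl ⟨D', hD'D.trans hDF, hD'r, hDdisj.subset hD'D⟩
  refine .inr ⟨D.biUnion id, ?_, fun A hA => ?_⟩
  · calc (D.biUnion id).card ≤ D.card * s :=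
          card_biUnion_le_card_mul _ _ _ fun A hA => hs A (hDF hA)
      _ ≤ (r - 1) * s := Nat.mul_le_mul_right _ (by omega)
  · by_contra hAY
    rw [not_nonempty_iff_eq_empty, ← disjoint_iff_inter_eq_empty, disjoint_biUnion_right] at hAY
    have hAD : A ∉ D := fun hAD => hF (by rwa [← bot_eq_empty, ← disjoint_self.1 (hAY A hAD)])
    have := hDmax (insert A D) <| mem_filter.2 ⟨mem_powerset.2 (insert_subset hA hDF), by
      rw [coe_insert]
      exact hDdisj.insert fun B hB _ => hAY B hB⟩
    rw [card_insert_of_notMem hAD] at this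
    omega

lemma exists_lt_card_filter_mem_of_mul_lt_card {F : Finset (Finset α)} {Y : Finset α} {N : ℕ}
    (hY : ∀ A ∈ F, (A ∩ Y).Nonempty) (hF : Y.card * N < F.card) :
    ∃ y ∈ Y, N < (F.filter (y ∈ ·)).card := by
  by_contra! h
  have hcover : F ⊆ Y.biUnion fun y => F.filter (y ∈ ·) := fun A hA => by
    obtain ⟨y, hy⟩ := hY A hA
    exact mem_biUnion.2 ⟨y, (mem_inter.1 hy).2, mem_filter.2 ⟨hA, (mem_inter.1 hy).1⟩⟩
  exact (card_le_card hcover |>.trans (card_biUnion_le_card_mul _ _ _ h)).not_gt hF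

theorem exists_isSunflower_of_le_card (k r : ℕ) :
    ∃ N, ∀ F : Finset (Finset α), N ≤ F.card → (∀ A ∈ F, A.card ≤ k) →
      ∃ F' ⊆ F, F'.card = r ∧ IsSunflower F' := by
  induction k with
  | zero =>
    refine ⟨2, fun F hF hk => absurd (card_le_card (s := F) (t := {∅}) fun A hA => ?_)
      (by rw [card_singleton]; omega)⟩
    exact mem_singleton.2 (card_eq_zero.1 (Nat.le_zero.1 (hk A hA)))
  | succ k ih =>
    obtain ⟨N, hN⟩ := ih
    refine ⟨(r - 1) * (k + 1) * N + 2, fun F hF hk => ?_⟩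
    rcases exists_pairwiseDisjoint_or_exists_inter_nonempty (F.erase ∅) r (k + 1)
      (fun A hA => hk A (mem_of_mem_erase hA)) (notMem_erase _ _) with
      ⟨D, hD, hDr, hDdisj⟩ | ⟨Y, hY, hYF⟩
    · exact ⟨D, hD.trans (erase_subset _ _), hDr, .of_pairwiseDisjoint hDdisj⟩
    have hcard : Y.card * N < (F.erase ∅).card := by
      have := Nat.mul_le_mul_right N hY
      have := pred_card_le_card_erase (a := ∅) (s := F)
      omega
    obtain ⟨y, -, hy⟩ := exists_lt_card_filter_mem_of_mul_lt_card hYF hcard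
    set G := (F.erase ∅).filter (y ∈ ·)
    have hyG : ∀ A ∈ G, y ∈ A := fun A hA => (mem_filter.1 hA).2
    have hGk : ∀ A ∈ G, A.card ≤ k + 1 := fun A hA =>
      hk A (mem_of_mem_erase (mem_filter.1 hA).1)
    obtain ⟨F'', hF''G, hF''r, hF''⟩ := hN (G.image (·.erase y))
      (by rw [card_image_of_injOn fun A hA B hB => erase_injOn' y (hyG A hA) (hyG B hB)]; omega)
      (by
        simp only [forall_mem_image]
        exact fun A hA => by rw [card_erase_of_mem (hyG A hA)]; have := hGk A hA; omega)
    obtain ⟨F', hF'G, hF'r, hF'⟩ := exists_isSunflower_of_subset_image_erase hyG hF''G hF''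
    exact ⟨F', hF'G.trans ((filter_subset _ _).trans (erase_subset _ _)), hF'r.trans hF''r, hF'⟩

end Sunflower

lemma sun_spec (k r : ℕ) : ∀ F : Finset (Finset ℕ), F.card = Sun k r →
    (∀ A ∈ F, A.card ≤ k) → ∃ F' ⊆ F, F'.card = r ∧ IsSunflower F' := by
  obtain ⟨N, hN⟩ := exists_isSunflower_of_le_card (α := ℕ) k r
  exact Nat.sInf_mem (s := {N | ∀ F : Finset (Finset ℕ), F.card = N →
    (∀ A ∈ F, A.card ≤ k) → ∃ F' ⊆ F, F'.card = r ∧ IsSunflower F'})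
    ⟨N, fun F hF => hN F hF.ge⟩

lemma IsSunflower.exists_isSunflowerTuple_orderEmbOfFin {α ι : Type*} [DecidableEq α]
    [Fintype ι] [LinearOrder ι] {F : Finset (Finset α)} (hF : IsSunflower F) {r : ℕ}
    (x : ι → Finset α) (hr : r ≤ (univ.filter (x · ∈ F)).card) :
    ∃ J : {J : Finset ι // J.card = r},
      IsSunflowerTuple fun i => x (J.1.orderEmbOfFin J.2 i) := by
  obtain ⟨J, hJ, hJr⟩ := exists_subset_card_eq hr
  exact ⟨⟨J, hJr⟩,
    hF.isSunflowerTuple fun i => (mem_filter.1 (hJ (orderEmbOfFin_mem J hJr i))).2⟩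

lemma exists_isSunflowerTuple_orderEmbOfFin {k r : ℕ} (hr : 0 < r)
    (x : Fin (Sun k r * r) → Finset ℕ) (hx : ∀ j, (x j).card ≤ k) :
    ∃ J : {J : Finset (Fin (Sun k r * r)) // J.card = r},
      IsSunflowerTuple fun i => x (J.1.orderEmbOfFin J.2 i) := by
  by_cases hdistinct : Sun k r ≤ (univ.image x).card
  · obtain ⟨V, hV, hVcard⟩ := exists_subset_card_eq hdistinct
    obtain ⟨F, hFV, hFr, hF⟩ := sun_spec k r V hVcard fun A hA => by
      obtain ⟨j, -, rfl⟩ := mem_image.1 (hV hA)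
      exact hx j
    refine hF.exists_isSunflowerTuple_orderEmbOfFin x (hFr.ge.trans ?_)
    calc F.card ≤ ((univ.filter (x · ∈ F)).image x).card := card_le_card fun B hB => by
          obtain ⟨j, -, rfl⟩ := mem_image.1 (hV (hFV hB))
          exact mem_image_of_mem x (mem_filter.2 ⟨mem_univ j, hB⟩)
      _ ≤ _ := card_image_le
  · have hne : (univ.image x).Nonempty :=
      (univ_nonempty_iff.2 ⟨⟨0, Nat.mul_pos (by omega) hr⟩⟩).image x
    obtain ⟨B, -, hB⟩ := exists_le_card_fiber_of_mul_le_card_of_maps_to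
      (fun j _ => mem_image_of_mem x (mem_univ j)) hne
      (by rw [card_univ, Fintype.card_fin]; exact Nat.mul_le_mul_right r (by omega))
    have hB_sunflower : IsSunflower {B} := .of_pairwiseDisjoint (by simp)
    exact hB_sunflower.exists_isSunflowerTuple_orderEmbOfFin x (by simpa using hB)

lemma Nat.choose_mul_le_four_mul_pow (N r : ℕ) : (N * r).choose r ≤ (4 * N) ^ r := by
  have h : ((N * r).choose r : ℝ) ≤ (4 * N) ^ r := calc
    _ ≤ ((N * r : ℕ) : ℝ) ^ r / r.factorial := Nat.choose_le_pow_div r (N * r)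
    _ = N ^ r * (r ^ r / r.factorial) := by push_cast; ring
    _ ≤ N ^ r * Real.exp 1 ^ r := by
      rw [← Real.exp_nat_mul, mul_one]
      gcongr
      exact Real.pow_div_factorial_le_exp _ (Nat.cast_nonneg r) r
    _ ≤ N ^ r * 4 ^ r := by
      gcongr
      exact (Real.exp_one_lt_three.trans (by norm_num)).le
    _ = (4 * N) ^ r := by ring
  exact_mod_cast h

lemma MeasureTheory.Measure.map_pi_comp_of_injective {ι κ β : Type*} [Fintype ι] [Fintype κ]
    [MeasurableSpace β] (μ : Measure β) [IsProbabilityMeasure μ] {g : κ → ι}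
    (hg : Function.Injective g) :
    (Measure.pi fun _ : ι => μ).map (fun x k => x (g k)) = Measure.pi fun _ : κ => μ := by
  have hindep : iIndepFun (fun k (x : ι → β) => x (g k)) (Measure.pi fun _ => μ) :=
    (iIndepFun_pi (X := fun _ => id) fun _ => aemeasurable_id).precomp hg
  rw [(iIndepFun_iff_map_fun_eq_pi_map fun k => (measurable_pi_apply (g k)).aemeasurable).1
    hindep]
  congr with k : 1
  exact (measurePreserving_eval _ (g k)).map_eq

lemma one_le_choose_mul_pi_isSunflowerTuple {k r : ℕ} (hr : 0 < r) (μ : Measure (Finset ℕ))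
    [IsProbabilityMeasure μ] (hμ : ∀ᵐ B ∂μ, B.card ≤ k) :
    1 ≤ ((Sun k r * r).choose r : ℝ≥0∞) *
      Measure.pi (fun _ : Fin r => μ) {y | IsSunflowerTuple y} := by
  set ν := Measure.pi fun _ : Fin (Sun k r * r) => μ
  set E : {J : Finset (Fin (Sun k r * r)) // J.card = r} →
      Set (Fin (Sun k r * r) → Finset ℕ) :=
    fun J => {x | IsSunflowerTuple fun i => x (J.1.orderEmbOfFin J.2 i)}
  have hE : ∀ J, ν (E J) = Measure.pi (fun _ : Fin r => μ) {y | IsSunflowerTuple y} := by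
    intro J
    rw [← Measure.map_pi_comp_of_injective μ (J.1.orderEmbOfFin J.2).injective,
      Measure.map_apply (measurable_pi_lambda _ fun i => measurable_pi_apply _)
        (Set.to_countable _).measurableSet]
    rfl
  have hcover : ∀ᵐ x ∂ν, x ∈ ⋃ J, E J := by
    filter_upwards [ae_all_iff.2 fun j => (Measure.tendsto_eval_ae_ae (i := j)).eventually hμ]
      with x hx
    exact Set.mem_iUnion.2 (exists_isSunflowerTuple_orderEmbOfFin hr x hx)
  calc 1 = ν Set.univ := measure_univ.symm
    _ ≤ ν (⋃ J, E J) := measure_mono_ae (hcover.mono fun x hx _ => hx)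
    _ ≤ ∑ J, ν (E J) := measure_iUnion_fintype_le ν E
    _ = _ := by
      simp only [hE, sum_const, card_univ, Fintype.card_finset_len, Fintype.card_fin,
        nsmul_eq_mul]

theorem probabilistic_erdos_rado_general (k r : ℕ) (hr : 1 ≤ r)
    {Ω : Type*} [MeasureSpace Ω] [IsProbabilityMeasure (ℙ : Measure Ω)]
    (S : Finset ℕ) (A : Fin r → Ω → Finset ℕ)
    (hmeas : ∀ i, Measurable (A i))
    (hval : ∀ i ω, A i ω ⊆ S ∧ (A i ω).card = k)
    (hindep : iIndepFun A ℙ)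
    (hident : ∀ i, Measure.map (A i) ℙ = Measure.map (A ⟨0, hr⟩) ℙ) :
    ((4 * Sun k r : ℝ≥0∞) ^ r)⁻¹ ≤ ℙ {ω | IsSunflowerTuple fun i => A i ω} := by
  set μ := Measure.map (A ⟨0, hr⟩) ℙ
  have : IsProbabilityMeasure μ := Measure.isProbabilityMeasure_map (hmeas _).aemeasurable
  have hμ : ∀ᵐ B ∂μ, B.card ≤ k :=
    (ae_map_iff (hmeas _).aemeasurable (Set.to_countable _).measurableSet).2
      (.of_forall fun ω => (hval _ ω).2.le)
  have hlaw : Measure.map (fun ω i => A i ω) ℙ = Measure.pi fun _ : Fin r => μ := by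
    rw [(iIndepFun_iff_map_fun_eq_pi_map fun i => (hmeas i).aemeasurable).1 hindep]
    simp only [hident, μ]
  have hsun : ℙ {ω | IsSunflowerTuple fun i => A i ω} =
      Measure.pi (fun _ : Fin r => μ) {y | IsSunflowerTuple y} := by
    rw [← hlaw,
      Measure.map_apply (measurable_pi_lambda _ hmeas) (Set.to_countable _).measurableSet]
    rfl
  have hchoose : ((Sun k r * r).choose r : ℝ≥0∞) ≤ (4 * Sun k r) ^ r := by
    exact_mod_cast Nat.choose_mul_le_four_mul_pow (Sun k r) r
  rw [hsun, ENNReal.inv_le_iff_le_mul (fun h => absurd h (measure_ne_top _ _))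
    (fun h => absurd h (by finiteness))]
  exact (one_le_choose_mul_pi_isSunflowerTuple hr μ hμ).trans (by gcongr)

/-- Probabilistic Erdős–Rado theorem: if `𝐀₁, …, 𝐀ᵣ` are independent copies of a random
`k`-element subset of a finite set `S`, then they form a sunflower with probability at
least `(4 Sun(k,r))^{-r}`. -/
theorem probabilistic_erdos_rado (k r : ℕ) (hk : 1 ≤ k) (hr : 1 ≤ r)
    {Ω : Type*} [MeasureSpace Ω] [IsProbabilityMeasure (ℙ : Measure Ω)]
    (S : Finset ℕ) (A : Fin r → Ω → Finset ℕ)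
    (hmeas : ∀ i, Measurable (A i))
    (hval : ∀ i ω, A i ω ⊆ S ∧ (A i ω).card = k)
    (hindep : iIndepFun A ℙ)
    (hident : ∀ i, Measure.map (A i) ℙ = Measure.map (A ⟨0, hr⟩) ℙ) :
    ((4 * Sun k r : ℝ≥0∞) ^ r)⁻¹ ≤ ℙ {ω | IsSunflowerTuple fun i => A i ω} :=
  probabilistic_erdos_rado_general k r hr S A hmeas hval hindep hident
end

section
/- (Denominator orthogonality on the torus) Let $(d,k,S,\varepsilon)$ be an $(r,c)$-good major arc parameter set, and for each $A \subseteq S$ with $|A| \leq k$, let $\Sigma_A = \Sigma_{\subseteq A} \setminus \bigcup_{B \subsetneq A} \Sigma_{\subseteq B}$. Suppose $A_1, \dots, A_{2r}$ are subsets of $S$ of cardinality at most $k$ containing a nonce (an element of $S$ in exactly one $A_j$). Then for any $\alpha_j \in \Sigma_{A_j}$ and $\theta_j \in [-\varepsilon,\varepsilon]^d$ for $j = 1, \dots, 2r$, one has $\sum_{j=1}^r (\alpha_j + \theta_j) - \sum_{j=r+1}^{2r} (\alpha_j + \theta_j) \neq 0$ in $\mathbb{T}^d$. -/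
/-!
Let `x` be the family `α₁, …, α_r, -β₁, …, -β_r` and `N` the product of all the `∏ q ∈ Aⱼ, q`
and `∏ q ∈ Bⱼ, q`, so that `N` kills `∑ x`. If the combination vanished, `∑ x = -τ` in the torus
with `τ = ∑ θ - ∑ η`, so every `N τᵢ` is an integer; goodness gives `N |τᵢ| < 1`, hence `τ = 0`
and `∑ x = 0`. If the nonce `q₀` occurs only in the denominator set of `x_{j₀}`, multiplying
`∑ x = 0` by the denominators of the other terms, all coprime to `q₀`, shows that the product
over that set with `q₀` removed already kills `x_{j₀}`, contradicting minimality.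
-/

open Finset

theorem nsmul_eq_zero_of_dvd {G : Type*} [AddMonoid G] {x : G} {m n : ℕ} (hmn : m ∣ n)
    (hx : m • x = 0) : n • x = 0 :=
  addOrderOf_dvd_iff_nsmul_eq_zero.1 ((addOrderOf_dvd_iff_nsmul_eq_zero.2 hx).trans hmn)

theorem nsmul_eq_zero_of_sum_eq_zero_of_coprime {G ι : Type*} [AddCommGroup G] [DecidableEq ι]
    {s : Finset ι} {x : ι → G} {n : ι → ℕ} {j₀ : ι} (hj₀ : j₀ ∈ s) (hsum : ∑ j ∈ s, x j = 0)
    (hx : ∀ j ∈ s.erase j₀, n j • x j = 0) {p m : ℕ} (hx₀ : (p * m) • x j₀ = 0)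
    (hp : Nat.Coprime p (∏ j ∈ s.erase j₀, n j)) : m • x j₀ = 0 := by
  have hM : (∏ j ∈ s.erase j₀, n j) • x j₀ = 0 := by
    rw [eq_neg_of_add_eq_zero_left ((add_sum_erase s x hj₀).trans hsum), smul_neg, smul_sum,
      sum_eq_zero fun j hj => nsmul_eq_zero_of_dvd (dvd_prod_of_mem n hj) (hx j hj), neg_zero]
  rw [← addOrderOf_dvd_iff_nsmul_eq_zero] at hM hx₀ ⊢
  exact (Nat.Coprime.coprime_dvd_left hM hp.symm).dvd_of_dvd_mul_left hx₀

theorem Nat.coprime_prod_of_pairwise_coprime {S : Set ℕ} (hS : S.Pairwise Nat.Coprime) {q : ℕ}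
    (hq : q ∈ S) {T : Finset ℕ} (hT : ↑T ⊆ S) (hqT : q ∉ T) : Nat.Coprime q (∏ a ∈ T, a) :=
  Nat.Coprime.prod_right fun _ ha => hS hq (hT ha) (ne_of_mem_of_not_mem ha hqT).symm

theorem nsmul_prod_erase_eq_zero_of_sum_eq_zero {G κ : Type*} [AddCommGroup G] [Fintype κ]
    [DecidableEq κ] {S : Set ℕ} (hS : S.Pairwise Nat.Coprime) {D : κ → Finset ℕ}
    (hD : ∀ j, ↑(D j) ⊆ S) {x : κ → G} (hx : ∀ j, (∏ q ∈ D j, q) • x j = 0)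
    (hsum : ∑ j, x j = 0) {q₀ : ℕ} (hq₀ : q₀ ∈ S) {j₀ : κ} (hj₀ : q₀ ∈ D j₀)
    (huniq : ∀ j, q₀ ∈ D j → j = j₀) : (∏ q ∈ (D j₀).erase q₀, q) • x j₀ = 0 := by
  refine nsmul_eq_zero_of_sum_eq_zero_of_coprime (p := q₀) (mem_univ j₀) hsum
    (fun j _ => hx j) ?_ ?_
  · rw [mul_prod_erase _ (fun q => q) hj₀]
    exact hx j₀
  · exact Nat.Coprime.prod_right fun j hj => Nat.coprime_prod_of_pairwise_coprime hS hq₀ (hD j)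
      fun hq => ne_of_mem_erase hj (huniq j hq)

theorem AddCircle.eq_zero_of_nsmul_eq_zero_of_add_coe_eq_zero {p t : ℝ} {N : ℕ}
    {x : AddCircle p} (hN : 0 < N) (hx : N • x = 0) (ht : N * |t| < |p|) (h : x + t = 0) :
    x = 0 := by
  have hNt : ((N * t : ℝ) : AddCircle p) = 0 := by
    rw [← nsmul_eq_mul, AddCircle.coe_nsmul, eq_neg_of_add_eq_zero_right h, smul_neg, hx,
      neg_zero]
  obtain ⟨n, hn⟩ := (AddCircle.coe_eq_zero_iff p).1 hNt
  have hn0 : n = 0 := by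
    rw [← Int.abs_lt_one_iff, ← Int.cast_lt (R := ℝ), Int.cast_abs, Int.cast_one]
    refine lt_of_mul_lt_mul_right ?_ (abs_nonneg p)
    rwa [← abs_mul, ← zsmul_eq_mul, hn, one_mul, abs_mul, Nat.abs_cast]
  have ht0 : t = 0 := by
    rw [hn0, zero_smul] at hn
    exact (mul_eq_zero.1 hn.symm).resolve_left (by positivity)
  rwa [ht0, AddCircle.coe_zero, add_zero] at h

theorem AddCircle.sum_eq_zero_of_sum_add_coe_eq_zero {ι κ : Type*} [Fintype κ] {p : ℝ}
    {x : κ → ι → AddCircle p} {t : κ → ι → ℝ} {n : κ → ℕ} (hn : ∀ j, 0 < n j)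
    (hx : ∀ j, n j • x j = 0) (ht : ∀ i, (∏ j, n j : ℕ) * |∑ j, t j i| < |p|)
    (h : ∑ j, (x j + fun i => (t j i : AddCircle p)) = 0) : ∑ j, x j = 0 := by
  have hN : (∏ j, n j) • ∑ j, x j = 0 := by
    rw [smul_sum]
    exact sum_eq_zero fun j _ => nsmul_eq_zero_of_dvd (dvd_prod_of_mem _ (mem_univ j)) (hx j)
  refine funext fun i => eq_zero_of_nsmul_eq_zero_of_add_coe_eq_zero
    (prod_pos fun j _ => hn j) (congrFun hN i) (ht i) ?_
  simpa only [Finset.sum_apply, Pi.add_apply, Pi.zero_apply, sum_add_distrib,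
    QuotientAddGroup.mk_sum] using congrFun h i

theorem Finset.card_filter_univ_sum {α β : Type*} [Fintype α] [Fintype β] (p : α ⊕ β → Prop)
    [DecidablePred p] :
    #(univ.filter p) = #(univ.filter fun a => p (.inl a)) + #(univ.filter fun b => p (.inr b)) := by
  simp only [card_filter, Fintype.sum_sum_type]

theorem prod_prod_le_pow_card_mul {ι : Type*} [Fintype ι] (C : ι → Finset ℕ) {Q k : ℕ}
    (hQ : 1 ≤ Q) (hle : ∀ j, ∀ q ∈ C j, q ≤ Q) (hcard : ∀ j, #(C j) ≤ k) :
    ∏ j, ∏ q ∈ C j, q ≤ Q ^ (Fintype.card ι * k) :=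
  calc ∏ j, ∏ q ∈ C j, q ≤ ∏ _j : ι, Q ^ k :=
        prod_le_prod' fun j _ =>
          (prod_le_pow_card _ _ _ (hle j)).trans (Nat.pow_le_pow_right hQ (hcard j))
    _ = Q ^ (Fintype.card ι * k) := by rw [prod_const, card_univ, ← pow_mul, mul_comm]

theorem abs_sum_le_card_mul {ι R : Type*} [Ring R] [LinearOrder R] [IsOrderedRing R]
    (s : Finset ι) {f : ι → R} {ε : R} (hf : ∀ j ∈ s, |f j| ≤ ε) : |∑ j ∈ s, f j| ≤ #s * ε :=
  (abs_sum_le_sum_abs f s).trans ((sum_le_card_nsmul s _ ε hf).trans_eq (nsmul_eq_mul _ _))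

theorem mul_abs_lt_one_of_lt_div {N : ℕ} {M a c ε τ : ℝ} (ha : 0 < a) (hM : 0 < M)
    (hN : N ≤ M) (hc : c < 1) (hε : ε < c / (a * M)) (hτ : |τ| ≤ a * ε) : N * |τ| < 1 :=
  calc N * |τ| ≤ M * (a * ε) := by gcongr
    _ < c := by rw [lt_div_iff₀ (by positivity)] at hε; linarith
    _ < 1 := hc

theorem denominator_orthogonality_general
    (d k r : ℕ) (hr : 1 ≤ r)
    (c ε : ℝ) (hc1 : c < 1)
    (S : Finset ℕ) (hS1 : ∀ q ∈ S, 0 < q) (hScop : (S : Set ℕ).Pairwise Nat.Coprime)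
    (qmax : ℕ) (hq1 : 1 ≤ qmax) (hqmax : ∀ q ∈ S, q ≤ qmax)
    (hgood : ε < c / (2 * r * (qmax : ℝ) ^ (2 * r * k)))
    (A B : Fin r → Finset ℕ) (hA : ∀ j, A j ⊆ S ∧ (A j).card ≤ k)
    (hB : ∀ j, B j ⊆ S ∧ (B j).card ≤ k)
    (hnonce : ∃ q ∈ S, (Finset.univ.filter fun j => q ∈ A j).card
        + (Finset.univ.filter fun j => q ∈ B j).card = 1)
    (α β : Fin r → Fin d → AddCircle (1 : ℝ))
    (hα : ∀ j, (∏ q ∈ A j, q) • α j = 0 ∧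
      ∀ C : Finset ℕ, C ⊂ A j → ¬ ((∏ q ∈ C, q) • α j = 0))
    (hβ : ∀ j, (∏ q ∈ B j, q) • β j = 0 ∧
      ∀ C : Finset ℕ, C ⊂ B j → ¬ ((∏ q ∈ C, q) • β j = 0))
    (θ η : Fin r → Fin d → ℝ)
    (hθ : ∀ j i, |θ j i| ≤ ε) (hη : ∀ j i, |η j i| ≤ ε) :
    (∑ j, (α j + fun i => ((θ j i : ℝ) : AddCircle (1 : ℝ)))) -
      (∑ j, (β j + fun i => ((η j i : ℝ) : AddCircle (1 : ℝ)))) ≠ 0 := by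
  intro h
  set D : Fin r ⊕ Fin r → Finset ℕ := Sum.elim A B
  set x : Fin r ⊕ Fin r → Fin d → AddCircle (1 : ℝ) := Sum.elim α (-β)
  set t : Fin r ⊕ Fin r → Fin d → ℝ := Sum.elim θ (-η)
  have hD : ∀ j, D j ⊆ S ∧ #(D j) ≤ k := Sum.rec hA hB
  have hx : ∀ j, (∏ q ∈ D j, q) • x j = 0 ∧ ∀ C ⊂ D j, ¬ ((∏ q ∈ C, q) • x j = 0) := by
    rintro (j | j)
    · exact hα j
    · simpa only [x, D, Sum.elim_inr, Pi.neg_apply, smul_neg, neg_eq_zero] using hβ j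
  have hxt : ∑ j, (x j + fun i => (t j i : AddCircle (1 : ℝ))) = 0 := by
    rw [← h, Fintype.sum_sum_type, sub_eq_add_neg, ← sum_neg_distrib]
    congr! 2 with j
    ext i
    simp [x, t, add_comm]
  have hNle : ∏ j, ∏ q ∈ D j, q ≤ qmax ^ (2 * r * k) := by
    have := prod_prod_le_pow_card_mul D hq1 (fun j q hq => hqmax q ((hD j).1 hq))
      (fun j => (hD j).2)
    rwa [Fintype.card_sum, Fintype.card_fin, ← two_mul] at this
  have ht : ∀ i, |∑ j, t j i| ≤ 2 * r * ε := fun i => by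
    have := abs_sum_le_card_mul (f := fun j => t j i) univ fun j _ => by
      rcases j with j | j
      · exact hθ j i
      · simpa [t] using hη j i
    rwa [card_univ, Fintype.card_sum, Fintype.card_fin, Nat.cast_add, ← two_mul] at this
  have hxsum : ∑ j, x j = 0 := by
    refine AddCircle.sum_eq_zero_of_sum_add_coe_eq_zero
      (fun j => prod_pos fun q hq => hS1 q ((hD j).1 hq)) (fun j => (hx j).1) (fun i => ?_) hxt
    rw [abs_one]
    exact mul_abs_lt_one_of_lt_div (by positivity) (by positivity) (by exact_mod_cast hNle) hc1
      hgood (ht i)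
  obtain ⟨q₀, hq₀, hcard⟩ := hnonce
  obtain ⟨j₀, hj₀⟩ := card_eq_one.1 ((card_filter_univ_sum fun j => q₀ ∈ D j).trans hcard)
  obtain ⟨hj₀D, huniq⟩ := eq_singleton_iff_unique_mem.1 hj₀
  exact (hx j₀).2 _ (erase_ssubset (mem_filter.1 hj₀D).2)
    (nsmul_prod_erase_eq_zero_of_sum_eq_zero hScop (fun j => (hD j).1) (fun j => (hx j).1)
      hxsum hq₀ (mem_filter.1 hj₀D).2 fun j hj => huniq j (mem_filter.2 ⟨mem_univ j, hj⟩))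

/-- Denominator orthogonality on the torus: in an `(r,c)`-good major arc parameter set,
if `A₁, …, A_{2r} ⊆ S` (of cardinality at most `k`) contain a nonce, `αⱼ ∈ Σ_{Aⱼ}` and
`θⱼ ∈ [-ε,ε]^d`, then `∑_{j≤r}(αⱼ+θⱼ) - ∑_{j>r}(αⱼ+θⱼ) ≠ 0` in `𝕋^d`. -/
theorem denominator_orthogonality
    (d k r : ℕ) (hd : 1 ≤ d) (hk : 1 ≤ k) (hr : 1 ≤ r)
    (c ε : ℝ) (hc0 : 0 < c) (hc1 : c < 1) (hε : 0 < ε)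
    (S : Finset ℕ) (hS1 : ∀ q ∈ S, 0 < q) (hScop : (S : Set ℕ).Pairwise Nat.Coprime)
    (qmax : ℕ) (hq1 : 1 ≤ qmax) (hqmax : ∀ q ∈ S, q ≤ qmax)
    (hgood : ε < c / (2 * r * (qmax : ℝ) ^ (2 * r * k)))
    (A B : Fin r → Finset ℕ) (hA : ∀ j, A j ⊆ S ∧ (A j).card ≤ k)
    (hB : ∀ j, B j ⊆ S ∧ (B j).card ≤ k)
    (hnonce : ∃ q ∈ S, (Finset.univ.filter fun j => q ∈ A j).card
        + (Finset.univ.filter fun j => q ∈ B j).card = 1)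
    (α β : Fin r → Fin d → AddCircle (1 : ℝ))
    (hα : ∀ j, (∏ q ∈ A j, q) • α j = 0 ∧
      ∀ C : Finset ℕ, C ⊂ A j → ¬ ((∏ q ∈ C, q) • α j = 0))
    (hβ : ∀ j, (∏ q ∈ B j, q) • β j = 0 ∧
      ∀ C : Finset ℕ, C ⊂ B j → ¬ ((∏ q ∈ C, q) • β j = 0))
    (θ η : Fin r → Fin d → ℝ)
    (hθ : ∀ j i, |θ j i| ≤ ε) (hη : ∀ j i, |η j i| ≤ ε) :
    (∑ j, (α j + fun i => ((θ j i : ℝ) : AddCircle (1 : ℝ)))) -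
      (∑ j, (β j + fun i => ((η j i : ℝ) : AddCircle (1 : ℝ)))) ≠ 0 :=
  denominator_orthogonality_general d k r hr c ε hc1 S hS1 hScop qmax hq1 hqmax hgood A B hA hB
    hnonce α β hα hβ θ η hθ hη
end

section
/- (Erdős–Rado sunflower bounds) For positive integers $k, r$, let $\mathrm{Sun}(k,r)$ be the least $N$ such that any $N$ distinct sets each of cardinality at most $k$ contain $r$ distinct members forming a sunflower. Then $(r-1)^k \leq \mathrm{Sun}(k,r) \leq (r-1)^k \, k! + 1$. -/
open Finset

lemma insert_sdiff_insert'' {x : ℕ} {B C : Finset ℕ} (hx : x ∉ B) :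
    insert x B \ insert x C = B \ C := by
  ext a
  simp only [mem_sdiff, mem_insert, not_or]
  constructor
  · rintro ⟨ha | ha, hne, hc⟩
    · exact absurd ha hne
    · exact ⟨ha, hc⟩
  · rintro ⟨ha, hc⟩
    exact ⟨Or.inr ha, fun h => hx (h ▸ ha), hc⟩

lemma erdosRado : ∀ k r : ℕ, ∀ F : Finset (Finset ℕ),
    (∀ A ∈ F, A.card ≤ k) → (r - 1) ^ k * Nat.factorial k < F.card →
    ∃ F' ⊆ F, F'.card = r ∧ IsSunflower F' := by
  intro k
  induction k with
  | zero =>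
    intro r F hcard hlt
    simp only [pow_zero, Nat.factorial_zero, one_mul] at hlt
    exfalso
    have hsub : F ⊆ {∅} := fun A hA => by
      simp [Finset.card_eq_zero.mp (Nat.le_zero.mp (hcard A hA))]
    have := Finset.card_le_card hsub
    simp at this
    omega
  | succ k ih =>
    intro r F hcard hlt
    classical
    rcases Nat.eq_zero_or_pos r with rfl | hr1
    · exact ⟨∅, Finset.empty_subset F, rfl, ∅, by simp, by simp⟩
    set s := r - 1 with hs
    set m := s ^ k * Nat.factorial k with hm
    have hltm : s * (k + 1) * m < F.card := by
      have hprod : s ^ (k + 1) * Nat.factorial (k + 1) = s * (k + 1) * m := by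
        rw [hm, pow_succ, Nat.factorial_succ]; ring
      rw [← hprod]; exact hlt
    -- maximal pairwise disjoint subfamily
    let P : Finset (Finset ℕ) → Prop := fun T => ∀ A ∈ T, ∀ B ∈ T, A ≠ B → Disjoint A B
    have hne : (F.powerset.filter P).Nonempty := ⟨∅, by simp [P]⟩
    obtain ⟨T, hTmem, hTmax⟩ := Finset.exists_max_image (F.powerset.filter P) Finset.card hne
    rw [Finset.mem_filter, Finset.mem_powerset] at hTmem
    obtain ⟨hTF, hTP⟩ := hTmem
    by_cases hTr : r ≤ T.card
    · -- pairwise disjoint sunflower with empty core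
      obtain ⟨T', hT'T, hT'card⟩ := Finset.exists_subset_card_eq (s := T) (n := r) hTr
      refine ⟨T', hT'T.trans hTF, hT'card, ∅, fun A _ => Finset.empty_subset A, ?_⟩
      intro A hA B hB hAB
      simpa using hTP A (hT'T hA) B (hT'T hB) hAB
    · push_neg at hTr
      have hTs : T.card ≤ s := by omega
      set D := T.biUnion id with hD
      -- maximality consequence
      have hkey : ∀ A ∈ F, Disjoint A D → A = ∅ ∧ A ∈ T := by
        intro A hAF hAD
        have hAdisj : ∀ B ∈ T, Disjoint A B := fun B hB =>
          hAD.mono_right (Finset.subset_biUnion_of_mem id hB)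
        have hAT : A ∈ T := by
          by_contra hAT
          have hP : P (insert A T) := by
            intro X hX Y hY hXY
            rcases Finset.mem_insert.mp hX with rfl | hX'
            · rcases Finset.mem_insert.mp hY with rfl | hY'
              · exact absurd rfl hXY
              · exact hAdisj Y hY'
            · rcases Finset.mem_insert.mp hY with rfl | hY'
              · exact (hAdisj X hX').symm
              · exact hTP X hX' Y hY' hXY
          have hmem : insert A T ∈ F.powerset.filter P := by
            rw [Finset.mem_filter, Finset.mem_powerset]
            exact ⟨Finset.insert_subset hAF hTF, hP⟩
          have := hTmax _ hmem
          rw [Finset.card_insert_of_notMem hAT] at this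
          omega
        have hsub : A ⊆ D := Finset.subset_biUnion_of_mem id hAT
        have hAA : Disjoint A A := hAD.mono_right hsub
        refine ⟨?_, hAT⟩
        rwa [disjoint_self, Finset.bot_eq_empty] at hAA
      set F₁ := F.filter (fun A => ¬ Disjoint A D) with hF₁
      have hF₁sub : F₁ ⊆ F := Finset.filter_subset _ _
      -- cardinality bound D.card * m < F₁.card
      have hmain : D.card * m < F₁.card := by
        by_cases hemp : ∅ ∈ F
        · have hempT : ∅ ∈ T := (hkey ∅ hemp (Finset.disjoint_left.mpr (by simp))).2
          have hs1 : 1 ≤ T.card := Finset.card_pos.mpr ⟨∅, hempT⟩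
          have hsge : 1 ≤ s := by omega
          have hm1 : 1 ≤ m := by
            rw [hm]
            exact Nat.one_le_iff_ne_zero.mpr (by positivity)
          have hDerase : D = (T.erase ∅).biUnion id := by
            rw [hD]
            conv_lhs => rw [← Finset.insert_erase hempT]
            rw [Finset.biUnion_insert]
            simp
          have hDcard : D.card ≤ (T.card - 1) * (k + 1) := by
            rw [hDerase]
            calc ((T.erase ∅).biUnion id).card ≤ ∑ A ∈ T.erase ∅, A.card :=
                  Finset.card_biUnion_le
              _ ≤ (T.erase ∅).card * (k + 1) := by
                  apply Finset.sum_le_card_nsmul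
                  intro A hA
                  exact hcard A (hTF (Finset.mem_of_mem_erase hA))
              _ = (T.card - 1) * (k + 1) := by
                  rw [Finset.card_erase_of_mem hempT]
          have hF₁card : F.card ≤ F₁.card + 1 := by
            have hss : F.filter (fun A => Disjoint A D) ⊆ {∅} := by
              intro A hA
              rw [Finset.mem_filter] at hA
              simp [(hkey A hA.1 hA.2).1]
            have h2 := Finset.card_le_card hss
            simp only [Finset.card_singleton] at h2
            have h3 := Finset.card_filter_add_card_filter_not
              (s := F) (p := fun A => Disjoint A D)
            have h4 : F.filter (fun a => ¬ Disjoint a D) = F₁ := rfl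
            rw [h4] at h3
            omega
          have hDm : D.card * m + m ≤ s * (k + 1) * m := by
            have h1 : D.card + 1 ≤ s * (k + 1) := by
              have h2 : (T.card - 1) * (k + 1) + (k + 1) ≤ s * (k + 1) := by
                calc (T.card - 1) * (k + 1) + (k + 1) = ((T.card - 1) + 1) * (k + 1) := by ring
                  _ ≤ s * (k + 1) := Nat.mul_le_mul_right _ (by omega)
              omega
            calc D.card * m + m = (D.card + 1) * m := by ring
              _ ≤ s * (k + 1) * m := Nat.mul_le_mul_right _ h1
          calc D.card * m < D.card * m + m := by omega
            _ ≤ s * (k + 1) * m := hDm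
            _ ≤ F.card - 1 := Nat.le_pred_of_lt hltm
            _ ≤ F₁.card := by omega
        · have hF₁eq : F₁ = F := by
            apply Finset.filter_true_of_mem
            intro A hA hdisj
            exact hemp ((hkey A hA hdisj).1 ▸ hA)
          have hDcard : D.card ≤ T.card * (k + 1) := by
            calc (T.biUnion id).card ≤ ∑ A ∈ T, A.card := Finset.card_biUnion_le
              _ ≤ T.card * (k + 1) := by
                  apply Finset.sum_le_card_nsmul
                  intro A hA
                  exact hcard A (hTF hA)
          rw [hF₁eq]
          calc D.card * m ≤ s * (k + 1) * m :=
                Nat.mul_le_mul_right _ (hDcard.trans (Nat.mul_le_mul_right _ hTs))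
            _ < F.card := hltm
      -- pigeonhole
      let f : Finset ℕ → ℕ := fun A => if h : (A ∩ D).Nonempty then (A ∩ D).min' h else 0
      have hmaps : ∀ A ∈ F₁, f A ∈ D := by
        intro A hA
        rw [hF₁, Finset.mem_filter] at hA
        have hne' : (A ∩ D).Nonempty := Finset.not_disjoint_iff_nonempty_inter.mp hA.2
        simp only [f, dif_pos hne']
        exact (Finset.mem_inter.mp ((A ∩ D).min'_mem hne')).2
      obtain ⟨x, hxD, hx⟩ :=
        Finset.exists_lt_card_fiber_of_mul_lt_card_of_maps_to hmaps hmain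
      have hxmem : ∀ A ∈ F₁.filter (fun A => f A = x), x ∈ A := by
        intro A hA
        rw [Finset.mem_filter] at hA
        obtain ⟨hA1, hA2⟩ := hA
        rw [hF₁, Finset.mem_filter] at hA1
        have hne' : (A ∩ D).Nonempty := Finset.not_disjoint_iff_nonempty_inter.mp hA1.2
        have hfA : f A ∈ A ∩ D := by
          simp only [f, dif_pos hne']
          exact (A ∩ D).min'_mem hne'
        rw [hA2] at hfA
        exact (Finset.mem_inter.mp hfA).1
      set Fx := (F₁.filter (fun A => f A = x)).image (fun A => A.erase x) with hFx
      have hFxcard : m < Fx.card := by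
        rw [hFx, Finset.card_image_of_injOn]
        · exact hx
        · intro A hA B hB hAB
          have hxa := hxmem A hA
          have hxb := hxmem B hB
          have hAB' : A.erase x = B.erase x := hAB
          rw [← Finset.insert_erase hxa, ← Finset.insert_erase hxb, hAB']
      have hFxsize : ∀ B ∈ Fx, B.card ≤ k := by
        intro B hB
        rw [hFx, Finset.mem_image] at hB
        obtain ⟨A, hA, rfl⟩ := hB
        have := hcard A (hF₁sub (Finset.mem_filter.mp hA).1)
        rw [Finset.card_erase_of_mem (hxmem A hA)]
        omega
      obtain ⟨G, hGFx, hGcard, C, hC1, hC2⟩ := ih r Fx hFxsize (by rw [← hm] at *; omega)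
      -- members of G don't contain x; insert x gives the sunflower in F
      have hGx : ∀ B ∈ G, x ∉ B := by
        intro B hB
        have := hGFx hB
        rw [hFx, Finset.mem_image] at this
        obtain ⟨A, _, rfl⟩ := this
        exact Finset.notMem_erase x A
      have hGF : ∀ B ∈ G, insert x B ∈ F := by
        intro B hB
        have := hGFx hB
        rw [hFx, Finset.mem_image] at this
        obtain ⟨A, hA, rfl⟩ := this
        rw [Finset.insert_erase (hxmem A hA)]
        exact hF₁sub (Finset.mem_filter.mp hA).1
      refine ⟨G.image (insert x), ?_, ?_, insert x C, ?_, ?_⟩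
      · intro A hA
        rw [Finset.mem_image] at hA
        obtain ⟨B, hB, rfl⟩ := hA
        exact hGF B hB
      · rw [Finset.card_image_of_injOn, hGcard]
        intro B hB B' hB' hBB'
        have h1 := hGx B hB
        have h2 := hGx B' hB'
        have : (insert x B).erase x = (insert x B').erase x := by rw [hBB']
        rwa [Finset.erase_insert h1, Finset.erase_insert h2] at this
      · intro A hA
        rw [Finset.mem_image] at hA
        obtain ⟨B, hB, rfl⟩ := hA
        exact Finset.insert_subset_insert x (hC1 B hB)
      · intro A hA B hB hAB
        rw [Finset.mem_image] at hA hB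
        obtain ⟨B₁, hB₁, rfl⟩ := hA
        obtain ⟨B₂, hB₂, rfl⟩ := hB
        have hne12 : B₁ ≠ B₂ := fun h => hAB (by rw [h])
        rw [insert_sdiff_insert'' (hGx B₁ hB₁), insert_sdiff_insert'' (hGx B₂ hB₂)]
        exact hC2 B₁ hB₁ B₂ hB₂ hne12


lemma block_eq {s i c j d : ℕ} (hc : c < s) (hd : d < s) (h : i * s + c = j * s + d) :
    i = j ∧ c = d := by
  have hs : 0 < s := by omega
  have h1 : (i * s + c) / s = i := by
    rw [mul_comm, Nat.mul_add_div hs, Nat.div_eq_of_lt hc, Nat.add_zero]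
  have h2 : (j * s + d) / s = j := by
    rw [mul_comm, Nat.mul_add_div hs, Nat.div_eq_of_lt hd, Nat.add_zero]
  have hij : i = j := by rw [← h1, ← h2, h]
  subst hij
  exact ⟨rfl, Nat.add_left_cancel h⟩

lemma exists_no_sunflower (k r : ℕ) (hr : 2 ≤ r) :
    ∃ F₀ : Finset (Finset ℕ), F₀.card = (r - 1) ^ k ∧ (∀ A ∈ F₀, A.card ≤ k) ∧
      ∀ F' ⊆ F₀, F'.card = r → ¬ IsSunflower F' := by
  classical
  set s := r - 1 with hs
  have hs1 : 1 ≤ s := by omega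
  -- each function f : Fin k → Fin s gives a transversal set
  let Af : (Fin k → Fin s) → Finset ℕ :=
    fun f => (Finset.univ : Finset (Fin k)).image (fun i : Fin k => (i : ℕ) * s + (f i : ℕ))
  have hmemAf : ∀ (f : Fin k → Fin s) (x : ℕ),
      x ∈ Af f ↔ ∃ i : Fin k, x = (i : ℕ) * s + (f i : ℕ) := by
    intro f x
    simp only [Af, Finset.mem_image, Finset.mem_univ, true_and]
    constructor
    · rintro ⟨i, rfl⟩; exact ⟨i, rfl⟩
    · rintro ⟨i, rfl⟩; exact ⟨i, rfl⟩
  have hAfcard : ∀ f : Fin k → Fin s, (Af f).card = k := by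
    intro f
    rw [Finset.card_image_of_injOn, Finset.card_univ, Fintype.card_fin]
    intro i _ j _ hij
    have hij' : (i : ℕ) * s + (f i : ℕ) = (j : ℕ) * s + (f j : ℕ) := hij
    exact Fin.ext (by exact_mod_cast (block_eq (f i).isLt (f j).isLt hij').1)
  have hAfinj : Function.Injective Af := by
    intro f g hfg
    funext i
    have hmem : (i : ℕ) * s + (f i : ℕ) ∈ Af g := by
      rw [← hfg, hmemAf]; exact ⟨i, rfl⟩
    rw [hmemAf] at hmem
    obtain ⟨j, hj⟩ := hmem
    obtain ⟨h1, h2⟩ := block_eq (f i).isLt (g j).isLt hj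
    have hij : i = j := Fin.ext (by exact_mod_cast h1)
    subst hij
    exact Fin.ext (by exact_mod_cast h2)
  refine ⟨(Finset.univ : Finset (Fin k → Fin s)).image Af, ?_, ?_, ?_⟩
  · rw [Finset.card_image_of_injective _ hAfinj, Finset.card_univ, Fintype.card_fun]
    simp
  · intro A hA
    rw [Finset.mem_image] at hA
    obtain ⟨f, _, rfl⟩ := hA
    exact le_of_eq (hAfcard f)
  · rintro F' hF' hF'card ⟨C, hC1, hC2⟩
    -- get two distinct members
    have h2le : 1 < F'.card := by omega
    obtain ⟨A, hA, B, hB, hAB⟩ := Finset.one_lt_card.mp h2le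
    obtain ⟨f, _, rfl⟩ := Finset.mem_image.mp (hF' hA)
    obtain ⟨g, _, hgB⟩ := Finset.mem_image.mp (hF' hB)
    -- C is a proper subset of Af f, so misses some block i
    have hCA : C ⊆ Af f := hC1 _ hA
    have hCne : C ≠ Af f := by
      intro hCeq
      have hsub : C ⊆ B := hC1 _ hB
      have hCcard : C.card = k := by rw [hCeq, hAfcard f]
      have hCB : C = B := Finset.eq_of_subset_of_card_le hsub (by
        rw [hCcard, ← hgB, hAfcard g])
      apply hAB
      rw [← hCeq, hCB]
    obtain ⟨y, hyA, hyC⟩ := Finset.exists_of_ssubset (hCA.ssubset_of_ne hCne)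
    rw [hmemAf] at hyA
    obtain ⟨i, rfl⟩ := hyA
    -- no element of C lies in block i
    have hCblock : ∀ z ∈ C, z / s ≠ (i : ℕ) := by
      intro z hz hzi
      have := hCA hz
      rw [hmemAf] at this
      obtain ⟨j, rfl⟩ := this
      have hdiv : ((j : ℕ) * s + (f j : ℕ)) / s = (j : ℕ) := by
        rw [mul_comm, Nat.mul_add_div (by omega), Nat.div_eq_of_lt (f j).isLt, Nat.add_zero]
      rw [hdiv] at hzi
      have : j = i := Fin.ext hzi
      subst this
      exact hyC hz
    -- each member of F' contributes a distinct element in block i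
    set Bl : Finset ℕ := (Finset.range s).image (fun c => (i : ℕ) * s + c) with hBl
    have hBlcard : Bl.card = s := by
      rw [hBl, Finset.card_image_of_injOn, Finset.card_range]
      intro a _ b _ hab
      have hab' : (i : ℕ) * s + a = (i : ℕ) * s + b := hab
      exact Nat.add_left_cancel hab'
    have hU : ∀ M ∈ F', ∃ x, x ∈ M \ C ∧ x ∈ Bl := by
      intro M hM
      obtain ⟨h, _, rfl⟩ := Finset.mem_image.mp (hF' hM)
      refine ⟨(i : ℕ) * s + (h i : ℕ), ?_, ?_⟩
      · rw [Finset.mem_sdiff]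
        constructor
        · rw [hmemAf]; exact ⟨i, rfl⟩
        · intro hc
          apply hCblock _ hc
          rw [mul_comm, Nat.mul_add_div (by omega), Nat.div_eq_of_lt (h i).isLt, Nat.add_zero]
      · rw [hBl, Finset.mem_image]
        exact ⟨(h i : ℕ), Finset.mem_range.mpr (h i).isLt, rfl⟩
    -- choose the witness for each M; injectivity from disjoint petals
    choose w hw1 hw2 using hU
    have hinj : ∀ M₁ (h₁ : M₁ ∈ F'), ∀ M₂ (h₂ : M₂ ∈ F'), M₁ ≠ M₂ → w M₁ h₁ ≠ w M₂ h₂ := by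
      intro M₁ h₁ M₂ h₂ hne heq
      have hd := hC2 M₁ h₁ M₂ h₂ hne
      exact Finset.disjoint_left.mp hd (hw1 M₁ h₁) (heq ▸ hw1 M₂ h₂)
    -- so F'.card ≤ Bl.card = s < r, contradiction
    have hcard : F'.card ≤ Bl.card := by
      classical
      have : F'.card = (F'.attach.image (fun M => w M.1 M.2)).card := by
        rw [Finset.card_image_of_injOn, Finset.card_attach]
        intro M₁ _ M₂ _ heq
        by_contra hne
        exact hinj M₁.1 M₁.2 M₂.1 M₂.2 (fun h => hne (Subtype.ext h)) heq
      rw [this]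
      apply Finset.card_le_card
      intro y hy
      rw [Finset.mem_image] at hy
      obtain ⟨M, _, rfl⟩ := hy
      exact hw2 M.1 M.2
    rw [hF'card, hBlcard] at hcard
    omega

/-- Erdős–Rado sunflower bounds: `(r-1)^k ≤ Sun(k,r) ≤ (r-1)^k · k! + 1`. -/
theorem erdos_rado_sunflower_bounds (k r : ℕ) (hk : 1 ≤ k) (hr : 1 ≤ r) :
    (r - 1) ^ k ≤ Sun k r ∧ Sun k r ≤ (r - 1) ^ k * Nat.factorial k + 1 := by
  classical
  set S : Set ℕ := {N | ∀ F : Finset (Finset ℕ), F.card = N → (∀ A ∈ F, A.card ≤ k) →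
    ∃ F' ⊆ F, F'.card = r ∧ IsSunflower F'} with hS
  have hN₀ : (r - 1) ^ k * Nat.factorial k + 1 ∈ S := by
    intro F hFcard hsize
    exact erdosRado k r F hsize (by omega)
  constructor
  · -- lower bound
    apply le_csInf ⟨_, hN₀⟩
    intro N hN
    rcases Nat.lt_or_ge r 2 with hr2 | hr2
    · have : r = 1 := by omega
      subst this
      simp [zero_pow (by omega : k ≠ 0)]
    · by_contra hlt
      push_neg at hlt
      obtain ⟨F₀, hF₀card, hF₀size, hF₀no⟩ := exists_no_sunflower k r hr2
      obtain ⟨F, hFsub, hFcard⟩ := Finset.exists_subset_card_eq (s := F₀) (n := N) (by omega)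
      obtain ⟨F', hF'sub, hF'card, hF'sun⟩ := hN F hFcard (fun A hA => hF₀size A (hFsub hA))
      exact hF₀no F' (hF'sub.trans hFsub) hF'card hF'sun
  · exact Nat.sInf_le hN₀
end
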